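/- For every real number τ > 0 there exists a constant C > 0, depending only on τ, such that for every integer k ≥ 2, every r > 0, every h ∈ (0,1) and every dimension N ≥ 3, one has ∑_{i=2}^{k} |x̄_1 − x̄_i|^{−τ} ≤ (C k^τ / (r √(1−h²))^τ) · ∑_{i=2}^{k} i^{−τ}. -/
import Mathlib

/-- The upper points `x̄_j = r(√(1−h²)cos(2(j−1)π/k), √(1−h²)sin(2(j−1)π/k), h, 0, …, 0)`. -/
noncomputable def xbar (N k : ℕ) (r h : ℝ) (j : ℕ) : EuclideanSpace ℝ (Fin N) :=
  (EuclideanSpace.equiv (Fin N) ℝ).symm fun i =>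
    if (i : ℕ) = 0 then r * Real.sqrt (1 - h ^ 2) * Real.cos (2 * ((j : ℝ) - 1) * Real.pi / k)
    else if (i : ℕ) = 1 then r * Real.sqrt (1 - h ^ 2) * Real.sin (2 * ((j : ℝ) - 1) * Real.pi / k)
    else if (i : ℕ) = 2 then r * h
    else 0

/-- The lower points `x̲_j = r(√(1−h²)cos(2(j−1)π/k), √(1−h²)sin(2(j−1)π/k), −h, 0, …, 0)`. -/
noncomputable def xunder (N k : ℕ) (r h : ℝ) (j : ℕ) : EuclideanSpace ℝ (Fin N) :=
  (EuclideanSpace.equiv (Fin N) ℝ).symm fun i =>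
    if (i : ℕ) = 0 then r * Real.sqrt (1 - h ^ 2) * Real.cos (2 * ((j : ℝ) - 1) * Real.pi / k)
    else if (i : ℕ) = 1 then r * Real.sqrt (1 - h ^ 2) * Real.sin (2 * ((j : ℝ) - 1) * Real.pi / k)
    else if (i : ℕ) = 2 then -(r * h)
    else 0

open Real Finset

/-- `sin(yπ/k)^{-τ} ≤ (2/k)^{-τ} y^{-τ}` for `0 < y ≤ k/2`. -/
private lemma helper_sin (k : ℕ) (y τ : ℝ) (hτ : 0 < τ)
    (hy : 0 < y) (hyk : y ≤ (k : ℝ) / 2) :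
    Real.sin (y * π / k) ^ (-τ) ≤ ((2:ℝ)/k)^(-τ) * y^(-τ) := by
  have hk0 : (0:ℝ) < k := by
    rcases Nat.eq_zero_or_pos k with h | h
    · exfalso; rw [h] at hyk; norm_num at hyk; linarith
    · exact_mod_cast h
  have hπ := Real.pi_pos
  have h1 : 0 ≤ y * π / k := by positivity
  have h2 : y * π / k ≤ π / 2 := by
    rw [div_le_div_iff₀ hk0 two_pos]
    nlinarith
  have hs : 2 / π * (y * π / k) ≤ Real.sin (y * π / k) := Real.mul_le_sin h1 h2
  have he : 2 / π * (y * π / k) = 2 / k * y := by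
    field_simp
  rw [he] at hs
  have hpos : 0 < 2 / (k:ℝ) * y := by positivity
  calc Real.sin (y * π / k) ^ (-τ) ≤ (2 / (k:ℝ) * y) ^ (-τ) :=
        Real.rpow_le_rpow_of_nonpos hpos hs (by linarith)
    _ = ((2:ℝ)/k)^(-τ) * y^(-τ) := Real.mul_rpow (by positivity) hy.le

private lemma sin_rpow_bound (k : ℕ) (x τ : ℝ) (hτ : 0 < τ)
    (hx1 : 1 ≤ x) (hxk : x ≤ (k:ℝ) - 1) :
    Real.sin (x * π / k) ^ (-τ) ≤ ((2:ℝ)/k)^(-τ) * (x^(-τ) + ((k:ℝ)-x)^(-τ)) := by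
  have hk0 : (0:ℝ) < k := by linarith
  have hx0 : 0 < x := by linarith
  have hkx0 : 0 < (k:ℝ) - x := by linarith
  rcases le_or_gt x ((k:ℝ)/2) with hle | hlt
  · calc Real.sin (x * π / k) ^ (-τ) ≤ ((2:ℝ)/k)^(-τ) * x^(-τ) :=
          helper_sin k x τ hτ hx0 hle
      _ ≤ ((2:ℝ)/k)^(-τ) * (x^(-τ) + ((k:ℝ)-x)^(-τ)) := by
          have h1 : (0:ℝ) ≤ ((k:ℝ)-x)^(-τ) := Real.rpow_nonneg hkx0.le _
          have h2 : (0:ℝ) ≤ ((2:ℝ)/k)^(-τ) := Real.rpow_nonneg (by positivity) _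
          nlinarith
  · have heq : Real.sin (x * π / k) = Real.sin (((k:ℝ) - x) * π / k) := by
      rw [← Real.sin_pi_sub]
      congr 1
      field_simp
    rw [heq]
    calc Real.sin (((k:ℝ)-x) * π / k) ^ (-τ) ≤ ((2:ℝ)/k)^(-τ) * ((k:ℝ)-x)^(-τ) :=
          helper_sin k _ τ hτ hkx0 (by linarith)
      _ ≤ ((2:ℝ)/k)^(-τ) * (x^(-τ) + ((k:ℝ)-x)^(-τ)) := by
          have h1 : (0:ℝ) ≤ x^(-τ) := Real.rpow_nonneg hx0.le _
          have h2 : (0:ℝ) ≤ ((2:ℝ)/k)^(-τ) := Real.rpow_nonneg (by positivity) _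
          nlinarith

private lemma norm_ge (N k : ℕ) (hN : 3 ≤ N) (r h : ℝ) (i : ℕ) (ha : 0 ≤ r * Real.sqrt (1 - h ^ 2))
    (hs : 0 ≤ Real.sin (((i:ℝ) - 1) * π / k)) :
    2 * (r * Real.sqrt (1 - h ^ 2)) * Real.sin (((i:ℝ) - 1) * π / k)
      ≤ ‖xbar N k r h 1 - xbar N k r h i‖ := by
  set a := r * Real.sqrt (1 - h ^ 2) with hadef
  set φ := ((i:ℝ) - 1) * π / k with hφ
  have hx0 : ∀ j : ℕ, xbar N k r h j ⟨0, by omega⟩ = a * Real.cos (2*((j:ℝ)-1)*π/k) := by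
    intro j; simp [xbar, hadef]
  have hx1 : ∀ j : ℕ, xbar N k r h j ⟨1, by omega⟩ = a * Real.sin (2*((j:ℝ)-1)*π/k) := by
    intro j; simp [xbar, hadef]
  have harg : 2*((i:ℝ)-1)*π/k = 2*φ := by rw [hφ]; ring
  have key : (2 * a * Real.sin φ) ^ 2 ≤ ∑ l : Fin N, (xbar N k r h 1 - xbar N k r h i) l ^ 2 := by
    have hne : (⟨0, by omega⟩ : Fin N) ≠ ⟨1, by omega⟩ := by simp [Fin.ext_iff]
    have hmono := Finset.sum_le_sum_of_subset_of_nonneg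
      (Finset.subset_univ ({⟨0, by omega⟩, ⟨1, by omega⟩} : Finset (Fin N)))
      (fun l _ _ => sq_nonneg ((xbar N k r h 1 - xbar N k r h i) l))
    refine le_trans ?_ hmono
    rw [Finset.sum_pair hne]
    have hc0 : (xbar N k r h 1 - xbar N k r h i) ⟨0, by omega⟩
        = a * (1 - Real.cos (2 * φ)) := by
      show xbar N k r h 1 ⟨0, by omega⟩ - xbar N k r h i ⟨0, by omega⟩ = _
      rw [hx0 1, hx0 i, harg]
      norm_num [Real.cos_zero]
      ring
    have hc1 : (xbar N k r h 1 - xbar N k r h i) ⟨1, by omega⟩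
        = -(a * Real.sin (2 * φ)) := by
      show xbar N k r h 1 ⟨1, by omega⟩ - xbar N k r h i ⟨1, by omega⟩ = _
      rw [hx1 1, hx1 i, harg]
      norm_num [Real.sin_zero]
    rw [hc0, hc1]
    have hpyth := Real.sin_sq_add_cos_sq (2 * φ)
    have hdbl := Real.cos_two_mul φ
    have hpyth2 := Real.sin_sq_add_cos_sq φ
    have hid : (a * (1 - Real.cos (2*φ)))^2 + (-(a * Real.sin (2*φ)))^2
        = (2*a*Real.sin φ)^2 := by
      linear_combination a^2*hpyth - 2*a^2*hdbl - 4*a^2*hpyth2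
    rw [hid]
  have hnorm : ‖xbar N k r h 1 - xbar N k r h i‖
      = Real.sqrt (∑ l : Fin N, (xbar N k r h 1 - xbar N k r h i) l ^ 2) := by
    rw [EuclideanSpace.norm_eq]
    congr 1
    exact Finset.sum_congr rfl fun l _ => by rw [Real.norm_eq_abs, sq_abs]
  rw [hnorm]
  have h2a : 0 ≤ 2 * a * Real.sin φ := by positivity
  calc 2 * a * Real.sin φ = Real.sqrt ((2 * a * Real.sin φ) ^ 2) := (Real.sqrt_sq h2a).symm
    _ ≤ _ := Real.sqrt_le_sqrt key

private lemma sum_reflect (k : ℕ) (hk : 2 ≤ k) (τ : ℝ) :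
    ∑ i ∈ Finset.Icc 2 k, ((k:ℝ) - ((i:ℝ) - 1)) ^ (-τ)
      = ∑ i ∈ Finset.Icc 2 k, ((i:ℝ) - 1) ^ (-τ) := by
  refine Finset.sum_nbij' (fun i => k + 2 - i) (fun i => k + 2 - i) ?_ ?_ ?_ ?_ ?_
  · intro a ha; simp only [Finset.mem_Icc] at *; omega
  · intro a ha; simp only [Finset.mem_Icc] at *; omega
  · intro a ha; simp only [Finset.mem_Icc] at ha; show k + 2 - (k + 2 - a) = a; omega
  · intro a ha; simp only [Finset.mem_Icc] at ha; show k + 2 - (k + 2 - a) = a; omega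
  · intro a ha
    rw [Finset.mem_Icc] at ha
    congr 1
    have h1 : a ≤ k + 2 := by omega
    have h2 : ((k + 2 - a : ℕ) : ℝ) = (k:ℝ) + 2 - a := by
      push_cast [Nat.cast_sub h1]
      ring
    simp only [h2]; ring

/-- For every `τ > 0` there is `C > 0` (depending only on `τ`) such that
for all `k ≥ 2`, `r > 0`, `h ∈ (0,1)`, `N ≥ 3`:
`∑_{i=2}^k |x̄_1 − x̄_i|^{−τ} ≤ (C k^τ/(r√(1−h²))^τ) ∑_{i=2}^k i^{−τ}`. -/
theorem stmt_4 (τ : ℝ) (hτ : 0 < τ) :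
    ∃ C > 0, ∀ (k : ℕ), 2 ≤ k → ∀ (r h : ℝ), 0 < r → h ∈ Set.Ioo (0 : ℝ) 1 →
      ∀ (N : ℕ), 3 ≤ N →
        ∑ i ∈ Finset.Icc 2 k, ‖xbar N k r h 1 - xbar N k r h i‖ ^ (-τ) ≤
          C * (k : ℝ) ^ τ / (r * Real.sqrt (1 - h ^ 2)) ^ τ *
            ∑ i ∈ Finset.Icc 2 k, (i : ℝ) ^ (-τ) := by
  refine ⟨2, two_pos, ?_⟩
  intro k hk r h hr hh N hN
  have hk0 : (0:ℝ) < k := by positivity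
  have hk2 : (2:ℝ) ≤ (k:ℝ) := by exact_mod_cast hk
  have hh2 : (0:ℝ) < 1 - h^2 := by nlinarith [hh.1, hh.2]
  set a := r * Real.sqrt (1 - h^2) with hadef
  have ha0 : 0 < a := mul_pos hr (Real.sqrt_pos.2 hh2)
  have hπ := Real.pi_pos
  set c : ℝ := (2*a)^(-τ) * ((2:ℝ)/k)^(-τ) with hcdef
  have hc0 : 0 ≤ c := mul_nonneg (Real.rpow_nonneg (by positivity) _)
    (Real.rpow_nonneg (by positivity) _)
  -- termwise bound
  have hterm : ∀ i ∈ Finset.Icc 2 k,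
      ‖xbar N k r h 1 - xbar N k r h i‖ ^ (-τ)
        ≤ c * ((((i:ℝ)-1))^(-τ) + ((k:ℝ)-((i:ℝ)-1))^(-τ)) := by
    intro i hi
    rw [Finset.mem_Icc] at hi
    have hi2 : (2:ℝ) ≤ (i:ℝ) := by exact_mod_cast hi.1
    have hik : (i:ℝ) ≤ (k:ℝ) := by exact_mod_cast hi.2
    have hx1 : (1:ℝ) ≤ (i:ℝ) - 1 := by linarith
    have hxk : (i:ℝ) - 1 ≤ (k:ℝ) - 1 := by linarith
    have hφpos : 0 < ((i:ℝ) - 1) * π / k := by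
      apply div_pos (by nlinarith) hk0
    have hφlt : ((i:ℝ) - 1) * π / k < π := by
      rw [div_lt_iff₀ hk0]
      nlinarith
    have hsin : 0 < Real.sin (((i:ℝ) - 1) * π / k) :=
      Real.sin_pos_of_pos_of_lt_pi hφpos hφlt
    have hnorm := norm_ge N k hN r h i ha0.le hsin.le
    rw [← hadef] at hnorm
    have h1 : ‖xbar N k r h 1 - xbar N k r h i‖ ^ (-τ)
        ≤ (2 * a * Real.sin (((i:ℝ) - 1) * π / k)) ^ (-τ) :=
      Real.rpow_le_rpow_of_nonpos (by positivity) hnorm (by linarith)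
    have h2 : (2 * a * Real.sin (((i:ℝ) - 1) * π / k)) ^ (-τ)
        = (2*a)^(-τ) * Real.sin (((i:ℝ) - 1) * π / k) ^ (-τ) :=
      Real.mul_rpow (by positivity) hsin.le
    have h3 := sin_rpow_bound k ((i:ℝ)-1) τ hτ hx1 hxk
    calc ‖xbar N k r h 1 - xbar N k r h i‖ ^ (-τ)
        ≤ (2*a)^(-τ) * Real.sin (((i:ℝ) - 1) * π / k) ^ (-τ) := by rw [← h2]; exact h1
      _ ≤ (2*a)^(-τ) * (((2:ℝ)/k)^(-τ) * ((((i:ℝ)-1))^(-τ) + ((k:ℝ)-((i:ℝ)-1))^(-τ))) :=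
          mul_le_mul_of_nonneg_left h3 (Real.rpow_nonneg (by positivity) _)
      _ = c * ((((i:ℝ)-1))^(-τ) + ((k:ℝ)-((i:ℝ)-1))^(-τ)) := by rw [hcdef]; ring
  have hstep1 := Finset.sum_le_sum hterm
  -- the reflected sum
  have hsum_eq : ∑ i ∈ Finset.Icc 2 k, c * ((((i:ℝ)-1))^(-τ) + ((k:ℝ)-((i:ℝ)-1))^(-τ))
      = c * (2 * ∑ i ∈ Finset.Icc 2 k, ((i:ℝ)-1)^(-τ)) := by
    rw [← Finset.mul_sum, Finset.sum_add_distrib, sum_reflect k hk τ]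
    ring
  -- Sum1 ≤ 2^τ * S
  have hS1 : ∑ i ∈ Finset.Icc 2 k, ((i:ℝ)-1)^(-τ)
      ≤ (2:ℝ)^τ * ∑ i ∈ Finset.Icc 2 k, (i:ℝ)^(-τ) := by
    rw [Finset.mul_sum]
    refine Finset.sum_le_sum fun i hi => ?_
    rw [Finset.mem_Icc] at hi
    have hi2 : (2:ℝ) ≤ (i:ℝ) := by exact_mod_cast hi.1
    have h1 : (0:ℝ) < (i:ℝ)/2 := by linarith
    have h2 : (i:ℝ)/2 ≤ (i:ℝ) - 1 := by linarith
    calc ((i:ℝ) - 1) ^ (-τ) ≤ ((i:ℝ)/2) ^ (-τ) :=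
          Real.rpow_le_rpow_of_nonpos h1 h2 (by linarith)
      _ = (2:ℝ)^τ * (i:ℝ)^(-τ) := by
          rw [Real.div_rpow (by linarith) (by norm_num),
            Real.rpow_neg (by norm_num : (0:ℝ) ≤ 2), div_eq_mul_inv, inv_inv]
          ring
  have hS0 : 0 ≤ ∑ i ∈ Finset.Icc 2 k, (i:ℝ)^(-τ) :=
    Finset.sum_nonneg fun i _ => Real.rpow_nonneg (Nat.cast_nonneg i) _
  -- coefficient computation
  have e1 : ((2:ℝ)*a)^(-τ) = (2:ℝ)^(-τ) * a^(-τ) := Real.mul_rpow (by norm_num) ha0.le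
  have e2 : ((2:ℝ)/k)^(-τ) = (2:ℝ)^(-τ) * (k:ℝ)^τ := by
    rw [Real.div_rpow (by norm_num) hk0.le, Real.rpow_neg hk0.le τ, div_eq_mul_inv, inv_inv]
  have e3 : (2:ℝ)^(-τ) * (2:ℝ)^τ = 1 := by
    rw [← Real.rpow_add two_pos]; norm_num
  have e4 : (2:ℝ) * (k:ℝ)^τ / a^τ = 2 * (k:ℝ)^τ * a^(-τ) := by
    rw [Real.rpow_neg ha0.le, div_eq_mul_inv]
  have e5 : (2:ℝ)^(-τ) ≤ 1 :=
    Real.rpow_le_one_of_one_le_of_nonpos one_le_two (by linarith)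
  have hA0 : (0:ℝ) ≤ (2:ℝ)^(-τ) := Real.rpow_nonneg (by norm_num) _
  have hB0 : (0:ℝ) ≤ a^(-τ) := Real.rpow_nonneg ha0.le _
  have hK0 : (0:ℝ) ≤ (k:ℝ)^τ := Real.rpow_nonneg hk0.le _
  have hT0 : (0:ℝ) ≤ (2:ℝ)^τ := Real.rpow_nonneg (by norm_num) _
  calc ∑ i ∈ Finset.Icc 2 k, ‖xbar N k r h 1 - xbar N k r h i‖ ^ (-τ)
      ≤ ∑ i ∈ Finset.Icc 2 k, c * ((((i:ℝ)-1))^(-τ) + ((k:ℝ)-((i:ℝ)-1))^(-τ)) := hstep1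
    _ = c * (2 * ∑ i ∈ Finset.Icc 2 k, ((i:ℝ)-1)^(-τ)) := hsum_eq
    _ ≤ c * (2 * ((2:ℝ)^τ * ∑ i ∈ Finset.Icc 2 k, (i:ℝ)^(-τ))) := by
        apply mul_le_mul_of_nonneg_left _ hc0
        linarith
    _ ≤ 2 * (k:ℝ)^τ / a^τ * ∑ i ∈ Finset.Icc 2 k, (i:ℝ)^(-τ) := by
        rw [hcdef, e1, e2, e4]
        have hkey : (2:ℝ)^(-τ) * a^(-τ) * ((2:ℝ)^(-τ) * (k:ℝ)^τ) * (2 * (2:ℝ)^τ)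
            ≤ 2 * (k:ℝ)^τ * a^(-τ) := by
          have h6 : (2:ℝ)^(-τ) * a^(-τ) * ((2:ℝ)^(-τ) * (k:ℝ)^τ) * (2 * (2:ℝ)^τ)
              = (2:ℝ)^(-τ) * (2 * (k:ℝ)^τ * a^(-τ)) * ((2:ℝ)^(-τ) * (2:ℝ)^τ) := by ring
          rw [h6, e3, mul_one]
          nlinarith [mul_nonneg hK0 hB0]
        calc (2:ℝ)^(-τ) * a^(-τ) * ((2:ℝ)^(-τ) * (k:ℝ)^τ) *
              (2 * ((2:ℝ)^τ * ∑ i ∈ Finset.Icc 2 k, (i:ℝ)^(-τ)))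
            = ((2:ℝ)^(-τ) * a^(-τ) * ((2:ℝ)^(-τ) * (k:ℝ)^τ) * (2 * (2:ℝ)^τ)) *
              ∑ i ∈ Finset.Icc 2 k, (i:ℝ)^(-τ) := by ring
          _ ≤ (2 * (k:ℝ)^τ * a^(-τ)) * ∑ i ∈ Finset.Icc 2 k, (i:ℝ)^(-τ) :=
              mul_le_mul_of_nonneg_right hkey hS0
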